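/- Let d = d₁·D with d₁, D ≥ 2, and for each b = 0…d₁ let B_b = {v_b(v) ⊗ w_b(v, v̄) : v = 1…d₁, v̄ = 1…D} be an orthonormal basis of ℂ^{d₁} ⊗ ℂ^{D}, where {v_b(v) : v = 1…d₁} is an orthonormal basis of ℂ^{d₁} and, for each b and v, {w_b(v, v̄) : v̄ = 1…D} is an orthonormal basis of ℂ^{D}. Assume the d₁+1 bases B₀, …, B_{d₁} are pairwise mutually unbiased. If a unit vector μ ∈ ℂ^{d₁} ⊗ ℂ^{D} is mutually unbiased to every B_b (|⟨v_b(v) ⊗ w_b(v, v̄), μ⟩|² = 1/d for all b, v, v̄), then μ is maximally entangled across ℂ^{d₁} ⊗ ℂ^{D}: the partial trace of |μ⟩⟨μ| over the second factor equals (1/d₁)·𝟙 on ℂ^{d₁}. -/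

import Mathlib

open scoped ComplexInnerProductSpace

/-- The tensor product of two vectors, realized concretely on `EuclideanSpace`:
`(a ⊗ b) (i, j) = a i * b j`. -/
noncomputable def eprod {ι γ : Type*} (a : EuclideanSpace ℂ ι) (b : EuclideanSpace ℂ γ) :
    EuclideanSpace ℂ (ι × γ) :=
  WithLp.toLp 2 (fun p : ι × γ => a p.1 * b p.2)

/-- The reduced density matrix of the pure state `μ` of a bipartite system, i.e. the
partial trace of the projector `|μ⟩⟨μ|` over the second tensor factor. -/
noncomputable def reducedDensityMatrix {ι γ : Type*} [Fintype γ]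
    (μ : EuclideanSpace ℂ (ι × γ)) : Matrix ι ι ℂ :=
  Matrix.of fun i j => ∑ k, μ (i, k) * star (μ (j, k))

/-!
Write `ρ` for the reduced density matrix of `μ`. Summing the unbiasedness conditions over an
orthonormal basis of the second factor (Parseval in `ℂ^D`) shows, first, that the bases
`{v_b(x)}_x` of `ℂ^{d₁}` are pairwise mutually unbiased and, second, that
`⟨v_b(x), ρ v_b(x)⟩ = 1/d₁` for all `b, x`.

The rank-one projectors onto `d₁ + 1` pairwise mutually unbiased bases span all of
`Matrix (Fin d₁) (Fin d₁) ℂ`: with respect to the Hilbert–Schmidt inner product, the identity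
together with the combinations `∑ₓ λ(x) |v_b(x)⟩⟨v_b(x)|`, where `λ` runs over an orthonormal
basis of `{λ | ∑ₓ λ(x) = 0}`, form an orthogonal family of `1 + (d₁ + 1)(d₁ - 1) = d₁²` nonzero
vectors. Since `ρ - 𝟙/d₁` is Hilbert–Schmidt orthogonal to every such projector, it vanishes.
-/

open Module

section OrthonormalBasis

variable {𝕜 E ι : Type*} [RCLike 𝕜] [NormedAddCommGroup E] [InnerProductSpace 𝕜 E]
  [FiniteDimensional 𝕜 E] [Fintype ι] {e : ι → E}

noncomputable def Orthonormal.toOrthonormalBasis (he : Orthonormal 𝕜 e)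
    (hcard : Fintype.card ι = finrank 𝕜 E) : OrthonormalBasis ι 𝕜 E :=
  OrthonormalBasis.mk he (he.linearIndependent.span_eq_top_of_card_eq_finrank' hcard).ge

@[simp]
theorem Orthonormal.coe_toOrthonormalBasis (he : Orthonormal 𝕜 e)
    (hcard : Fintype.card ι = finrank 𝕜 E) : ⇑(he.toOrthonormalBasis hcard) = e :=
  OrthonormalBasis.coe_mk he _

end OrthonormalBasis

section TensorProduct

variable {ι γ : Type*} [Fintype ι]

/-- `(⟨a| ⊗ 𝟙) μ`. -/
noncomputable def partialInner (a : EuclideanSpace ℂ ι) (μ : EuclideanSpace ℂ (ι × γ)) :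
    EuclideanSpace ℂ γ :=
  WithLp.toLp 2 fun k => ∑ i, star (a i) * μ (i, k)

theorem inner_eprod_left [Fintype γ] (a : EuclideanSpace ℂ ι) (c : EuclideanSpace ℂ γ)
    (μ : EuclideanSpace ℂ (ι × γ)) : ⟪eprod a c, μ⟫ = ⟪c, partialInner a μ⟫ := by
  simp only [PiLp.inner_apply, RCLike.inner_apply, eprod, partialInner, Fintype.sum_prod_type,
    Finset.sum_mul, map_mul, Complex.star_def]
  rw [Finset.sum_comm]
  refine Finset.sum_congr rfl fun k _ => Finset.sum_congr rfl fun i _ => ?_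
  ring

theorem partialInner_eprod (a a' : EuclideanSpace ℂ ι) (b : EuclideanSpace ℂ γ) :
    partialInner a (eprod a' b) = ⟪a, a'⟫ • b := by
  ext k
  simp only [partialInner, eprod, PiLp.toLp_apply, PiLp.smul_apply, smul_eq_mul,
    PiLp.inner_apply, RCLike.inner_apply, Finset.sum_mul, Complex.star_def]
  exact Finset.sum_congr rfl fun i _ => by ring

theorem inner_eprod_eprod [Fintype γ] (a a' : EuclideanSpace ℂ ι) (b b' : EuclideanSpace ℂ γ) :
    ⟪eprod a b, eprod a' b'⟫ = ⟪a, a'⟫ * ⟪b, b'⟫ := by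
  rw [inner_eprod_left, partialInner_eprod, inner_smul_right]

theorem inner_toEuclideanLin_reducedDensityMatrix [DecidableEq ι] [Fintype γ]
    (a : EuclideanSpace ℂ ι) (μ : EuclideanSpace ℂ (ι × γ)) :
    ⟪a, (reducedDensityMatrix μ).toEuclideanLin a⟫ = (‖partialInner a μ‖ : ℂ) ^ 2 := by
  have hg : ⟪partialInner a μ, partialInner a μ⟫ = (‖partialInner a μ‖ : ℂ) ^ 2 :=
    inner_self_eq_norm_sq_to_K _
  rw [← hg]
  simp only [PiLp.inner_apply, RCLike.inner_apply, Matrix.toLpLin_apply, reducedDensityMatrix,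
    partialInner, Matrix.mulVec, dotProduct, Matrix.of_apply, map_sum, map_mul, Finset.sum_mul,
    Finset.mul_sum, Complex.star_def, Complex.conj_conj]
  rw [Finset.sum_comm]
  conv_lhs => enter [2, y]; rw [Finset.sum_comm]
  rw [Finset.sum_comm]
  exact Finset.sum_congr rfl fun k _ => Finset.sum_congr rfl fun j _ =>
    Finset.sum_congr rfl fun i _ => by ring

theorem norm_sq_inner_eq_of_norm_sq_inner_eprod_eq [Fintype γ] {w : γ → EuclideanSpace ℂ γ}
    {a a' : EuclideanSpace ℂ ι} {c : EuclideanSpace ℂ γ} (hc : ‖c‖ = 1) (hw : Orthonormal ℂ w)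
    {r : ℝ}
    (h : ∀ y, ‖⟪eprod a c, eprod a' (w y)⟫‖ ^ 2 = r) :
    ‖⟪a, a'⟫‖ ^ 2 = Fintype.card γ * r := by
  have hparseval := (hw.toOrthonormalBasis (by simp)).sum_sq_norm_inner_left c
  simp only [Orthonormal.coe_toOrthonormalBasis, hc] at hparseval
  calc ‖⟪a, a'⟫‖ ^ 2 = ‖⟪a, a'⟫‖ ^ 2 * ∑ y, ‖⟪c, w y⟫‖ ^ 2 := by
        rw [hparseval, one_pow, mul_one]
    _ = ∑ y, ‖⟪eprod a c, eprod a' (w y)⟫‖ ^ 2 := by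
      simp only [Finset.mul_sum, inner_eprod_eprod, norm_mul, mul_pow]
    _ = Fintype.card γ * r := by simp [h]

theorem inner_toEuclideanLin_reducedDensityMatrix_eq_sum [DecidableEq ι] [Fintype γ]
    {w : γ → EuclideanSpace ℂ γ} (hw : Orthonormal ℂ w) (a : EuclideanSpace ℂ ι)
    (μ : EuclideanSpace ℂ (ι × γ)) :
    ⟪a, (reducedDensityMatrix μ).toEuclideanLin a⟫ =
      ((∑ y, ‖⟪eprod a (w y), μ⟫‖ ^ 2 : ℝ) : ℂ) := by
  have hparseval := (hw.toOrthonormalBasis (by simp)).sum_sq_norm_inner_right (partialInner a μ)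
  simp only [Orthonormal.coe_toOrthonormalBasis] at hparseval
  simp only [inner_toEuclideanLin_reducedDensityMatrix, inner_eprod_left]
  exact_mod_cast hparseval.symm

end TensorProduct

section HilbertSchmidt

variable {ι : Type*} [Fintype ι]

/-- Matrices as vectors of the Hilbert–Schmidt space: `⟪A.vecHS, B.vecHS⟫ = tr (Aᴴ * B)`. -/
noncomputable def Matrix.vecHS (A : Matrix ι ι ℂ) : EuclideanSpace ℂ (ι × ι) :=
  WithLp.toLp 2 fun p => A p.1 p.2

/-- The projector `|u⟩⟨u|`, as a vector of the Hilbert–Schmidt space. -/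
noncomputable def outer (u : EuclideanSpace ℂ ι) : EuclideanSpace ℂ (ι × ι) :=
  WithLp.toLp 2 fun p => u p.1 * star (u p.2)

theorem inner_outer_vecHS [DecidableEq ι] (a : EuclideanSpace ℂ ι) (A : Matrix ι ι ℂ) :
    ⟪outer a, A.vecHS⟫ = ⟪a, A.toEuclideanLin a⟫ := by
  simp only [PiLp.inner_apply, RCLike.inner_apply, outer, Matrix.vecHS, Matrix.toLpLin_apply,
    Matrix.mulVec, dotProduct, Fintype.sum_prod_type, Finset.sum_mul, map_mul, Complex.star_def,
    Complex.conj_conj]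
  exact Finset.sum_congr rfl fun i _ => Finset.sum_congr rfl fun j _ => by ring

theorem inner_outer_outer (a b : EuclideanSpace ℂ ι) :
    ⟪outer a, outer b⟫ = (‖⟪a, b⟫‖ : ℂ) ^ 2 := by
  rw [← Complex.mul_conj']
  simp only [PiLp.inner_apply, RCLike.inner_apply, outer, Fintype.sum_prod_type, map_sum,
    map_mul, Complex.star_def, Complex.conj_conj, Finset.sum_mul_sum]
  exact Finset.sum_congr rfl fun i _ => Finset.sum_congr rfl fun j _ => by ring

theorem orthonormal_outer {e : ι → EuclideanSpace ℂ ι} (he : Orthonormal ℂ e) :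
    Orthonormal ℂ fun x => outer (e x) := by
  classical
  rw [orthonormal_iff_ite] at he ⊢
  intro x y
  rw [inner_outer_outer, he]
  split_ifs <;> simp

theorem Orthonormal.sum_outer_eq_vecHS_one [DecidableEq ι] {e : ι → EuclideanSpace ℂ ι}
    (he : Orthonormal ℂ e) : ∑ x, outer (e x) = (1 : Matrix ι ι ℂ).vecHS := by
  ext ⟨i, j⟩
  have := (he.toOrthonormalBasis (by simp)).sum_inner_mul_inner
    (EuclideanSpace.single i 1) (EuclideanSpace.single j 1)
  simp only [Orthonormal.coe_toOrthonormalBasis, EuclideanSpace.inner_single_left,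
    EuclideanSpace.inner_single_right, map_one, one_mul] at this
  simpa [outer, Matrix.vecHS, Matrix.one_apply, PiLp.single_apply, eq_comm,
    apply_ite] using this

theorem Orthonormal.inner_sum_smul_outer {e : ι → EuclideanSpace ℂ ι} (he : Orthonormal ℂ e)
    (l l' : EuclideanSpace ℂ ι) :
    ⟪∑ x, l x • outer (e x), ∑ x, l' x • outer (e x)⟫ = ⟪l, l'⟫ := by
  rw [(orthonormal_outer he).inner_sum]
  simp [PiLp.inner_apply, mul_comm]

theorem inner_vecHS_one_sum_smul_outer [DecidableEq ι] {e : ι → EuclideanSpace ℂ ι}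
    (he : Orthonormal ℂ e) (l : EuclideanSpace ℂ ι) :
    ⟪(1 : Matrix ι ι ℂ).vecHS, ∑ x, l x • outer (e x)⟫ = ∑ x, l x := by
  simp [← inner_conj_symm _ (outer _), inner_outer_vecHS, he.1]

end HilbertSchmidt

section MutuallyUnbiased

variable {ι : Type*} [Fintype ι]

def MutuallyUnbiased (e f : ι → EuclideanSpace ℂ ι) : Prop :=
  ∀ x y, ‖⟪e x, f y⟫‖ ^ 2 = (Fintype.card ι : ℝ)⁻¹

theorem MutuallyUnbiased.inner_sum_smul_outer_eq_zero {e f : ι → EuclideanSpace ℂ ι}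
    (h : MutuallyUnbiased e f) (l l' : EuclideanSpace ℂ ι) (hl' : ∑ y, l' y = 0) :
    ⟪∑ x, l x • outer (e x), ∑ y, l' y • outer (f y)⟫ = 0 := by
  have h' : ∀ x y, (‖⟪e x, f y⟫‖ : ℂ) ^ 2 = (Fintype.card ι : ℂ)⁻¹ := fun x y => by
    rw [← Complex.ofReal_pow, h x y, Complex.ofReal_inv, Complex.ofReal_natCast]
  simp only [sum_inner, inner_sum, inner_smul_left, inner_smul_right, inner_outer_outer, h']
  simp [← Finset.sum_mul, hl']

variable {β κ : Type*} [DecidableEq ι] {u : β → ι → EuclideanSpace ℂ ι}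

theorem linearIndependent_vecHS_one_and_sum_smul_outer [Nonempty ι]
    (hu : ∀ b, Orthonormal ℂ (u b)) (hMU : Pairwise fun b b' => MutuallyUnbiased (u b) (u b'))
    {l : κ → EuclideanSpace ℂ ι} (hl : Orthonormal ℂ l) (hl_sum : ∀ k, ∑ x, l k x = 0) :
    LinearIndependent ℂ fun j : Option (β × κ) =>
      j.elim (1 : Matrix ι ι ℂ).vecHS fun p => ∑ x, l p.2 x • outer (u p.1 x) := by
  classical
  have hone : ∀ b k, ⟪(1 : Matrix ι ι ℂ).vecHS, ∑ x, l k x • outer (u b x)⟫ = 0 := fun b k => by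
    rw [inner_vecHS_one_sum_smul_outer (hu b), hl_sum]
  have hsum : ∀ b b' k k', ⟪∑ x, l k x • outer (u b x), ∑ x, l k' x • outer (u b' x)⟫ =
      if (b, k) = (b', k') then 1 else 0 := fun b b' k k' => by
    by_cases hb : b = b'
    · subst hb
      simp [(hu b).inner_sum_smul_outer, orthonormal_iff_ite.mp hl]
    · simp [(hMU hb).inner_sum_smul_outer_eq_zero _ _ (hl_sum k'), hb]
  refine linearIndependent_of_ne_zero_of_inner_eq_zero ?_ ?_
  · rintro (_ | ⟨b, k⟩) h
    · obtain ⟨i⟩ := ‹Nonempty ι›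
      simpa [Matrix.vecHS] using congrArg (fun X : EuclideanSpace ℂ (ι × ι) => X (i, i)) h
    · have h1 := hsum b b k k
      rw [show ∑ x, l k x • outer (u b x) = 0 from h, inner_zero_left] at h1
      simp at h1
  · rintro (_ | ⟨b, k⟩) (_ | ⟨b', k'⟩) hne
    · exact absurd rfl hne
    · exact hone b' k'
    · exact inner_eq_zero_symm.mp (hone b k)
    · simpa [hsum] using hne

theorem span_outer_eq_top_of_mutuallyUnbiased [Fintype β] [Nonempty ι]
    (hβ : Fintype.card β = Fintype.card ι + 1) (hu : ∀ b, Orthonormal ℂ (u b))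
    (hMU : Pairwise fun b b' => MutuallyUnbiased (u b) (u b')) :
    Submodule.span ℂ (Set.range fun p : β × ι => outer (u p.1 p.2)) = ⊤ := by
  set ones : EuclideanSpace ℂ ι := WithLp.toLp 2 fun _ => 1
  have hones : ones ≠ 0 := fun h => by
    simpa [ones] using congrArg (fun v : EuclideanSpace ℂ ι => v (Classical.arbitrary ι)) h
  set W := (ℂ ∙ ones)ᗮ
  have hn := Fintype.card_pos (α := ι)
  have hW : finrank ℂ W = Fintype.card ι - 1 := Submodule.finrank_add_finrank_orthogonal' <| by
    rw [finrank_span_singleton hones, finrank_euclideanSpace]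
    omega
  set l := stdOrthonormalBasis ℂ W
  have hl_sum : ∀ k, ∑ x, (l k : EuclideanSpace ℂ ι) x = 0 := fun k => by
    simpa [ones, PiLp.inner_apply] using
      Submodule.mem_orthogonal_singleton_iff_inner_right.mp (l k).2
  have hF := linearIndependent_vecHS_one_and_sum_smul_outer hu hMU
    (l.orthonormal.comp_linearIsometry W.subtypeₗᵢ) hl_sum
  have hcard : Fintype.card (Option (β × Fin (finrank ℂ W))) =
      finrank ℂ (EuclideanSpace ℂ (ι × ι)) := by
    simp only [Fintype.card_option, Fintype.card_prod, Fintype.card_fin, hβ, hW,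
      finrank_euclideanSpace]
    obtain ⟨m, hm⟩ := Nat.exists_eq_add_of_lt hn
    rw [hm]
    simp only [zero_add, add_tsub_cancel_right]
    ring
  rw [eq_top_iff, ← hF.span_eq_top_of_card_eq_finrank' hcard, Submodule.span_le]
  rintro _ ⟨_ | ⟨b, k⟩, rfl⟩
  · obtain ⟨b⟩ : Nonempty β := Fintype.card_pos_iff.mp (by omega)
    change (1 : Matrix ι ι ℂ).vecHS ∈ _
    rw [← (hu b).sum_outer_eq_vecHS_one]
    exact Submodule.sum_mem _ fun x _ => Submodule.subset_span ⟨(b, x), rfl⟩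
  · exact Submodule.sum_mem _ fun x _ =>
      Submodule.smul_mem _ _ (Submodule.subset_span ⟨(b, x), rfl⟩)

theorem Matrix.eq_smul_one_of_inner_toEuclideanLin_eq [Fintype β] [Nonempty ι]
    (hβ : Fintype.card β = Fintype.card ι + 1) (hu : ∀ b, Orthonormal ℂ (u b))
    (hMU : Pairwise fun b b' => MutuallyUnbiased (u b) (u b')) {A : Matrix ι ι ℂ} {c : ℂ}
    (hA : ∀ b x, ⟪u b x, A.toEuclideanLin (u b x)⟫ = c) : A = c • 1 := by
  have hperp : ∀ b x, ⟪outer (u b x), (A - c • 1).vecHS⟫ = 0 := fun b x => by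
    simp [inner_outer_vecHS, hA, (hu b).1 x]
  have hzero : (A - c • 1).vecHS = 0 := by
    have h : Submodule.span ℂ (Set.range fun p : β × ι => outer (u p.1 p.2)) ⟂
        Submodule.span ℂ {(A - c • 1).vecHS} :=
      Submodule.isOrtho_span.mpr <| by
        rintro _ ⟨p, rfl⟩ _ rfl
        exact hperp p.1 p.2
    rwa [span_outer_eq_top_of_mutuallyUnbiased hβ hu hMU, Submodule.isOrtho_top_left,
      Submodule.span_singleton_eq_bot] at h
  ext i j
  simpa [Matrix.vecHS, sub_eq_zero] using
    congrArg (fun X : EuclideanSpace ℂ (ι × ι) => X (i, j)) hzero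

end MutuallyUnbiased

theorem vector_MU_to_maximal_product_set_is_maximally_entangled
    {d₁ D : ℕ} (hd₁ : 2 ≤ d₁) (hD : 2 ≤ D)
    (v : Fin (d₁ + 1) → Fin d₁ → EuclideanSpace ℂ (Fin d₁))
    (w : Fin (d₁ + 1) → Fin d₁ → Fin D → EuclideanSpace ℂ (Fin D))
    (hv : ∀ b, Orthonormal ℂ (v b))
    (hw : ∀ b x, Orthonormal ℂ (w b x))
    (hMU : ∀ b b', b ≠ b' → ∀ (x y : Fin d₁) (x' y' : Fin D),
      ‖⟪eprod (v b x) (w b x x'), eprod (v b' y) (w b' y y')⟫‖ ^ 2 =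
        1 / ((d₁ * D : ℕ) : ℝ))
    (μ : EuclideanSpace ℂ (Fin d₁ × Fin D))
    (hμMU : ∀ b (x : Fin d₁) (x' : Fin D),
      ‖⟪eprod (v b x) (w b x x'), μ⟫‖ ^ 2 = 1 / ((d₁ * D : ℕ) : ℝ)) :
    reducedDensityMatrix μ = ((d₁ : ℂ))⁻¹ • (1 : Matrix (Fin d₁) (Fin d₁) ℂ) := by
  have : Nonempty (Fin d₁) := ⟨⟨0, by omega⟩⟩
  have hD_mul : (D : ℝ) * (1 / ((d₁ * D : ℕ) : ℝ)) = (d₁ : ℝ)⁻¹ := by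
    have : (D : ℝ) ≠ 0 := Nat.cast_ne_zero.mpr (by omega)
    push_cast
    field_simp
  have hvMU : Pairwise fun b b' => MutuallyUnbiased (v b) (v b') := fun b b' hbb' x y => by
    rw [norm_sq_inner_eq_of_norm_sq_inner_eprod_eq ((hw b x).1 ⟨0, by omega⟩) (hw b' y)
      (hMU b b' hbb' x y _), Fintype.card_fin, Fintype.card_fin, hD_mul]
  refine Matrix.eq_smul_one_of_inner_toEuclideanLin_eq (by simp) hv hvMU fun b x => ?_
  rw [inner_toEuclideanLin_reducedDensityMatrix_eq_sum (hw b x)]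
  simp only [hμMU, Finset.sum_const, Finset.card_univ, Fintype.card_fin, nsmul_eq_mul, hD_mul,
    Complex.ofReal_inv, Complex.ofReal_natCast]
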